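/- For n ≥ 5, any quotient of B_n(ℝP²) that is metabelian (solvable of derived length at most 2) is in fact abelian, hence is a quotient of ℤ/2 ⊕ ℤ/2. -/

import Mathlib

/-!
A braid relation `x y x = y x y` between commuting elements forces `x = y`. In a metabelian
quotient `Q`, applying this in the abelianization shows that `a_i = s_0⁻¹ s_i` lies in the abelian
group `Q'`, where `s_i` is the image of `σ_i`. Commutation of non-adjacent `σ`'s then says
`a_i s_0 a_i⁻¹ = a_j s_0 a_j⁻¹` whenever `|i - j| ≥ 2`; with at least four `σ`'s (`n ≥ 5`) all of
these equal `a_0 s_0 a_0⁻¹ = s_0`, so the `s_i` commute pairwise, and the braid relations force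
them to be equal. Once every `σ_i` maps to one `s`, the relations `σ_i ρ_{i+1} σ_i = ρ_i` and
`ρ_{i+1}⁻¹ ρ_i⁻¹ ρ_{i+1} ρ_i = σ_i²` give `s² = 1` and a single image `r` of the `ρ_j`, and
`ρ_0² = (σ_0 ⋯ σ_{n-2})(σ_{n-2} ⋯ σ_0)` gives `r² = 1`. So `Q` is generated by two commuting
elements of order dividing two.
-/
open FreeGroup in
/-- Relators of Van Buskirk's presentation of the braid group of the projective plane,
with 0-indexed generators: σ₀,…,σ_{n-2} (`Sum.inl`) and ρ₀,…,ρ_{n-1} (`Sum.inr`). -/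
def vanBuskirkRels (n : ℕ) : Set (FreeGroup (Sum (Fin (n-1)) (Fin n))) :=
  {w | (∃ (i j : Fin (n-1)), ((i:ℕ)+2 ≤ (j:ℕ) ∨ (j:ℕ)+2 ≤ (i:ℕ)) ∧
        w = of (Sum.inl i) * of (Sum.inl j) * (of (Sum.inl i))⁻¹ * (of (Sum.inl j))⁻¹)
    ∨ (∃ (i : ℕ) (h : i < n-1) (h' : i+1 < n-1),
        w = of (Sum.inl ⟨i,h⟩) * of (Sum.inl ⟨i+1,h'⟩) * of (Sum.inl ⟨i,h⟩) *
            (of (Sum.inl ⟨i+1,h'⟩))⁻¹ * (of (Sum.inl ⟨i,h⟩))⁻¹ * (of (Sum.inl ⟨i+1,h'⟩))⁻¹)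
    ∨ (∃ (i : Fin (n-1)) (j : Fin n), (j:ℕ) ≠ (i:ℕ) ∧ (j:ℕ) ≠ (i:ℕ)+1 ∧
        w = of (Sum.inl i) * of (Sum.inr j) * (of (Sum.inl i))⁻¹ * (of (Sum.inr j))⁻¹)
    ∨ (∃ (i : ℕ) (h : i < n-1) (hi : i < n) (hi' : i+1 < n),
        w = of (Sum.inl ⟨i,h⟩) * of (Sum.inr ⟨i+1,hi'⟩) * of (Sum.inl ⟨i,h⟩) *
            (of (Sum.inr ⟨i,hi⟩))⁻¹)
    ∨ (∃ (i : ℕ) (h : i < n-1) (hi : i < n) (hi' : i+1 < n),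
        w = (of (Sum.inr ⟨i+1,hi'⟩))⁻¹ * (of (Sum.inr ⟨i,hi⟩))⁻¹ * of (Sum.inr ⟨i+1,hi'⟩) *
            of (Sum.inr ⟨i,hi⟩) * ((of (Sum.inl ⟨i,h⟩))⁻¹)^2)
    ∨ (∃ (h : 0 < n),
        w = (of (Sum.inr ⟨0,h⟩))^2 *
            (((List.finRange (n-1)).map (fun i => of (Sum.inl i))).prod *
             (((List.finRange (n-1)).reverse.map (fun i => of (Sum.inl i))).prod))⁻¹)}

/-- The braid group `B_n(ℝP²)` of the projective plane, via Van Buskirk's presentation. -/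
abbrev BnRP2 (n : ℕ) : Type := PresentedGroup (vanBuskirkRels n)

/-- The generator σ_i (0-indexed). -/
def BnRP2.sigma (n : ℕ) (i : Fin (n-1)) : BnRP2 n := PresentedGroup.of (Sum.inl i)

/-- The generator ρ_j (0-indexed). -/
def BnRP2.rho (n : ℕ) (j : Fin n) : BnRP2 n := PresentedGroup.of (Sum.inr j)

open Subgroup
open scoped commutatorElement

theorem eq_of_braid_of_commute {M : Type*} [CancelMonoid M] {x y : M}
    (h : x * y * x = y * x * y) (hc : Commute x y) : x = y := by
  have : x * (x * y) = x * (y * y) := by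
    calc x * (x * y) = x * y * x := by rw [mul_assoc, hc.symm.eq]
      _ = y * x * y := h
      _ = x * (y * y) := by rw [hc.symm.eq, mul_assoc]
  exact mul_right_cancel (mul_left_cancel this)

theorem Fin.apply_eq_apply_of_consecutive {α : Type*} {m : ℕ} (f : Fin m → α)
    (h : ∀ i j : Fin m, (j : ℕ) = i + 1 → f i = f j) (i j : Fin m) : f i = f j := by
  suffices ∀ (k : ℕ) (hk : k < m), f ⟨k, hk⟩ = f ⟨0, by omega⟩ by
    rw [this i i.isLt, this j j.isLt]
  intro k
  induction k with
  | zero => intro _; rfl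
  | succ k ih => intro hk; rw [← h ⟨k, by omega⟩ ⟨k + 1, hk⟩ rfl, ih]

theorem Fin.apply_eq_apply_of_nonadjacent {α : Type*} {m : ℕ} (hm : 4 ≤ m) (f : Fin m → α)
    (h : ∀ i j : Fin m, (i : ℕ) + 2 ≤ j → f i = f j) (i j : Fin m) : f i = f j := by
  suffices ∀ k : Fin m, f k = f ⟨0, by omega⟩ by rw [this i, this j]
  intro ⟨k, hk⟩
  rcases Nat.lt_or_ge k 2 with hk2 | hk2
  · interval_cases k
    · rfl
    · rw [h ⟨1, hk⟩ ⟨3, by omega⟩ (by simp), h ⟨0, by omega⟩ ⟨3, by omega⟩ (by simp)]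
  · exact (h ⟨0, by omega⟩ ⟨k, hk⟩ hk2).symm

section Metabelian

variable {G : Type*} [Group G]

theorem commute_of_mem_commutator (hG : derivedSeries G 2 = ⊥) {x y : G}
    (hx : x ∈ commutator G) (hy : y ∈ commutator G) : Commute x y := by
  have : ⁅x, y⁆ ∈ derivedSeries G 2 := by
    rw [derivedSeries_succ, derivedSeries_one]
    exact commutator_mem_commutator hx hy
  rw [hG, mem_bot] at this
  exact commutatorElement_eq_one_iff_commute.mp this

theorem conj_eq_conj_of_commute {s a b : G} (hab : Commute a b) (h : Commute (s * a) (s * b)) :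
    a * s * a⁻¹ = b * s * b⁻¹ := by
  have h' : a * s * b = b * s * a := by
    simpa only [mul_assoc, mul_right_inj] using h.eq
  calc a * s * a⁻¹ = a * s * b * (b⁻¹ * a⁻¹) := by group
    _ = b * s * a * (a⁻¹ * b⁻¹) := by rw [h', ← mul_inv_rev, ← mul_inv_rev, hab.eq]
    _ = b * s * b⁻¹ := by group

theorem eq_of_braid_relations_of_metabelian (hG : derivedSeries G 2 = ⊥) {m : ℕ} (hm : 4 ≤ m)
    (S : Fin m → G) (hbraid : ∀ i j : Fin m, (j : ℕ) = i + 1 → S i * S j * S i = S j * S i * S j)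
    (hfar : ∀ i j : Fin m, (i : ℕ) + 2 ≤ j → Commute (S i) (S j)) (i j : Fin m) :
    S i = S j := by
  set s := S ⟨0, by omega⟩
  set a : Fin m → G := fun i => s⁻¹ * S i
  have hS : ∀ i, S i = s * a i := fun i => by simp [a]
  have ha_mem : ∀ i, a i ∈ commutator G := fun i => by
    rw [← Abelianization.ker_of, ← MonoidHom.eq_iff]
    refine Fin.apply_eq_apply_of_consecutive (Abelianization.of ∘ S) (fun i j hij => ?_) _ _
    exact eq_of_braid_of_commute (by simp only [Function.comp_apply, ← map_mul, hbraid i j hij])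
      (Commute.all _ _)
  have ha_comm : ∀ i j, Commute (a i) (a j) := fun i j =>
    commute_of_mem_commutator hG (ha_mem i) (ha_mem j)
  have hconj : ∀ i, a i * s * (a i)⁻¹ = s := fun i => by
    have hfar_conj : ∀ i j : Fin m, (i : ℕ) + 2 ≤ j → a i * s * (a i)⁻¹ = a j * s * (a j)⁻¹ :=
      fun i j hij => conj_eq_conj_of_commute (ha_comm i j) (by rw [← hS, ← hS]; exact hfar i j hij)
    rw [Fin.apply_eq_apply_of_nonadjacent hm _ hfar_conj i ⟨0, by omega⟩]
    simp [a, s]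
  have hs_comm : ∀ i, Commute s (a i) := fun i => (mul_inv_eq_iff_eq_mul.mp (hconj i)).symm
  have hS_comm : ∀ i j, Commute (S i) (S j) := fun i j => by
    rw [hS, hS]
    exact ((Commute.refl s).mul_right (hs_comm j)).mul_left
      ((hs_comm i).symm.mul_right (ha_comm i j))
  exact Fin.apply_eq_apply_of_consecutive S
    (fun i j hij => eq_of_braid_of_commute (hbraid i j hij) (hS_comm i j)) i j

end Metabelian

namespace BnRP2

variable {n : ℕ}

theorem sigma_commute_sigma (i j : Fin (n - 1)) (h : (i : ℕ) + 2 ≤ j) :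
    Commute (sigma n i) (sigma n j) := by
  have := PresentedGroup.one_of_mem (rels := vanBuskirkRels n) (Or.inl ⟨i, j, Or.inl h, rfl⟩)
  simp only [map_mul, map_inv] at this
  exact commutatorElement_eq_one_iff_commute.mp this

theorem sigma_braid (i j : Fin (n - 1)) (h : (j : ℕ) = i + 1) :
    sigma n i * sigma n j * sigma n i = sigma n j * sigma n i * sigma n j := by
  obtain ⟨i, hi⟩ := i
  obtain ⟨j, hj⟩ := j
  subst h
  have := PresentedGroup.one_of_mem (rels := vanBuskirkRels n) (Or.inr (Or.inl ⟨i, hi, hj, rfl⟩))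
  simp only [map_mul, map_inv] at this
  apply mul_inv_eq_one.mp
  simp only [mul_inv_rev, ← mul_assoc]
  exact this

theorem sigma_commute_rho (i : Fin (n - 1)) (j : Fin n) (h₁ : (j : ℕ) ≠ i) (h₂ : (j : ℕ) ≠ i + 1) :
    Commute (sigma n i) (rho n j) := by
  have := PresentedGroup.one_of_mem (rels := vanBuskirkRels n)
    (Or.inr (Or.inr (Or.inl ⟨i, j, h₁, h₂, rfl⟩)))
  simp only [map_mul, map_inv] at this
  exact commutatorElement_eq_one_iff_commute.mp this

theorem sigma_mul_rho_mul_sigma (i : Fin (n - 1)) (j k : Fin n) (hj : (j : ℕ) = i)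
    (hk : (k : ℕ) = i + 1) : sigma n i * rho n k * sigma n i = rho n j := by
  obtain ⟨i, hi⟩ := i
  obtain ⟨j, hj'⟩ := j
  obtain ⟨k, hk'⟩ := k
  simp only at hj hk
  subst hj hk
  have := PresentedGroup.one_of_mem (rels := vanBuskirkRels n)
    (Or.inr (Or.inr (Or.inr (Or.inl ⟨j, hi, hj', hk', rfl⟩))))
  simp only [map_mul, map_inv] at this
  exact mul_inv_eq_one.mp this

theorem rho_commutator (i : Fin (n - 1)) (j k : Fin n) (hj : (j : ℕ) = i)
    (hk : (k : ℕ) = i + 1) : (rho n k)⁻¹ * (rho n j)⁻¹ * rho n k * rho n j = sigma n i ^ 2 := by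
  obtain ⟨i, hi⟩ := i
  obtain ⟨j, hj'⟩ := j
  obtain ⟨k, hk'⟩ := k
  simp only at hj hk
  subst hj hk
  have := PresentedGroup.one_of_mem (rels := vanBuskirkRels n)
    (Or.inr (Or.inr (Or.inr (Or.inr (Or.inl ⟨j, hi, hj', hk', rfl⟩)))))
  simp only [map_mul, map_inv, map_pow, inv_pow] at this
  exact mul_inv_eq_one.mp this

theorem rho_zero_sq (h : 0 < n) :
    rho n ⟨0, h⟩ ^ 2 = ((List.finRange (n - 1)).map (sigma n)).prod *
      ((List.finRange (n - 1)).reverse.map (sigma n)).prod := by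
  have := PresentedGroup.one_of_mem (rels := vanBuskirkRels n)
    (Or.inr (Or.inr (Or.inr (Or.inr (Or.inr ⟨h, rfl⟩)))))
  simp only [map_mul, map_inv, map_pow, map_list_prod, List.map_map] at this
  exact mul_inv_eq_one.mp this

variable {G : Type*} [Group G] {φ : BnRP2 n →* G}

theorem map_sigma_eq_of_metabelian (hn : 5 ≤ n) (hG : derivedSeries G 2 = ⊥)
    (i j : Fin (n - 1)) : φ (sigma n i) = φ (sigma n j) :=
  eq_of_braid_relations_of_metabelian hG (by omega) (φ ∘ sigma n)
    (fun i j h => by simp only [Function.comp_apply, ← map_mul, sigma_braid i j h])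
    (fun i j h => (sigma_commute_sigma i j h).map φ) i j

theorem commute_map_sigma_map_rho (hσ : ∀ i j, φ (sigma n i) = φ (sigma n j)) (hn : 4 ≤ n)
    (i : Fin (n - 1)) (j : Fin n) : Commute (φ (sigma n i)) (φ (rho n j)) := by
  by_cases hj : (j : ℕ) < 2
  · rw [hσ i ⟨2, by omega⟩]
    exact (sigma_commute_rho _ j (by simp; omega) (by simp; omega)).map φ
  · rw [hσ i ⟨0, by omega⟩]
    exact (sigma_commute_rho _ j (by simp; omega) (by simp; omega)).map φ

theorem map_sigma_sq (hσ : ∀ i j, φ (sigma n i) = φ (sigma n j)) (hn : 4 ≤ n)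
    (i : Fin (n - 1)) : φ (sigma n i) ^ 2 = 1 := by
  set i₀ : Fin (n - 1) := ⟨0, by omega⟩
  set j₀ : Fin n := ⟨0, by omega⟩
  set j₁ : Fin n := ⟨1, by omega⟩
  have hconj := congrArg φ (sigma_mul_rho_mul_sigma i₀ j₀ j₁ rfl rfl)
  have hcomm := congrArg φ (rho_commutator i₀ j₀ j₁ rfl rfl)
  simp only [map_mul, map_inv, map_pow] at hconj hcomm
  -- `ρ₀ = s ρ₁ s` commutes with `ρ₁`, so the commutator relation reads `1 = s²`.
  have hs := commute_map_sigma_map_rho hσ hn i₀ j₁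
  have hρ : Commute (φ (rho n j₁)) (φ (rho n j₀)) := by
    rw [← hconj]
    exact (hs.symm.mul_right (Commute.refl _)).mul_right hs.symm
  rw [hσ i i₀, ← hcomm, hρ.inv_inv.eq]
  group

theorem map_rho_eq (hσ : ∀ i j, φ (sigma n i) = φ (sigma n j)) (hn : 4 ≤ n) (j k : Fin n) :
    φ (rho n j) = φ (rho n k) := by
  refine Fin.apply_eq_apply_of_consecutive (φ ∘ rho n) (fun j k hjk => ?_) j k
  set i : Fin (n - 1) := ⟨j, by omega⟩
  calc φ (rho n j) = φ (sigma n i) * φ (rho n k) * φ (sigma n i) := by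
        rw [← map_mul, ← map_mul, sigma_mul_rho_mul_sigma i j k rfl hjk]
    _ = φ (rho n k) * φ (sigma n i) ^ 2 := by
        rw [(commute_map_sigma_map_rho hσ hn i k).eq, sq, mul_assoc]
    _ = φ (rho n k) := by rw [map_sigma_sq hσ hn, mul_one]

theorem map_rho_sq (hσ : ∀ i j, φ (sigma n i) = φ (sigma n j)) (hn : 4 ≤ n) (j : Fin n) :
    φ (rho n j) ^ 2 = 1 := by
  set i₀ : Fin (n - 1) := ⟨0, by omega⟩
  have hconst : ⇑φ ∘ sigma n = fun _ => φ (sigma n i₀) := funext fun i => hσ i i₀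
  rw [map_rho_eq hσ hn j ⟨0, by omega⟩, ← map_pow, rho_zero_sq, map_mul, map_list_prod,
    map_list_prod, List.map_map, List.map_map, hconst]
  simp only [List.map_const', List.prod_replicate, List.length_reverse, List.length_finRange]
  rw [← pow_add, ← two_mul, pow_mul, map_sigma_sq hσ hn, one_pow]

end BnRP2

theorem PresentedGroup.closure_range_comp_of_surjective {α : Type*} {rels : Set (FreeGroup α)}
    {G : Type*} [Group G] {f : PresentedGroup rels →* G} (hf : Function.Surjective f) :
    closure (Set.range (f ∘ PresentedGroup.of)) = ⊤ := by
  rw [Set.range_comp, ← MonoidHom.map_closure, PresentedGroup.closure_range_of,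
    ← MonoidHom.range_eq_map, MonoidHom.range_eq_top.mpr hf]

def powZModHom {M : Type*} [Monoid M] {n : ℕ} [NeZero n] {x : M} (hx : x ^ n = 1) :
    Multiplicative (ZMod n) →* M where
  toFun a := x ^ a.toAdd.val
  map_one' := by simp
  map_mul' a b := by rw [toAdd_mul, ZMod.val_add, ← pow_eq_pow_mod _ hx, pow_add]

theorem powZModHom_ofAdd_one {M : Type*} [Monoid M] {n : ℕ} [NeZero n] {x : M} (hx : x ^ n = 1) :
    powZModHom hx (Multiplicative.ofAdd 1) = x := by
  simp only [powZModHom, MonoidHom.coe_mk, OneHom.coe_mk, toAdd_ofAdd, ZMod.val_one_eq_one_mod,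
    ← pow_eq_pow_mod _ hx, pow_one]

theorem exists_surjective_zmod_prod_of_closure_pair {G : Type*} [Group G] {m n : ℕ} [NeZero m]
    [NeZero n] {x y : G} (hxy : Commute x y) (hx : x ^ m = 1) (hy : y ^ n = 1)
    (hgen : closure {x, y} = ⊤) :
    ∃ ψ : Multiplicative (ZMod m × ZMod n) →* G, Function.Surjective ψ := by
  let ψ := ((powZModHom hx).noncommCoprod (powZModHom hy) fun a b => hxy.pow_pow _ _).comp
    (MulEquiv.prodMultiplicative (ZMod m) (ZMod n)).toMonoidHom
  refine ⟨ψ, MonoidHom.range_eq_top.mp (eq_top_iff.mpr (hgen ▸ (closure_le _).mpr ?_))⟩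
  rintro _ (rfl | rfl)
  · refine ⟨Multiplicative.ofAdd (1, 0), ?_⟩
    show powZModHom hx (.ofAdd 1) * powZModHom hy (.ofAdd 0) = _
    rw [powZModHom_ofAdd_one, ofAdd_zero, map_one, mul_one]
  · refine ⟨Multiplicative.ofAdd (0, 1), ?_⟩
    show powZModHom hx (.ofAdd 0) * powZModHom hy (.ofAdd 1) = _
    rw [powZModHom_ofAdd_one, ofAdd_zero, map_one, one_mul]

/-- For `n ≥ 5`, any metabelian quotient of `B_n(ℝP²)` (solvable of derived length at most 2)
is abelian, hence a quotient of `ℤ/2 ⊕ ℤ/2`. -/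
theorem metabelian_quotient_BnRP2_abelian (n : ℕ) (hn : 5 ≤ n) (Q : Type) [Group Q]
    (φ : BnRP2 n →* Q) (hsurj : Function.Surjective φ)
    (hmet : derivedSeries Q 2 = ⊥) :
    (∀ a b : Q, a * b = b * a) ∧
      ∃ ψ : Multiplicative (ZMod 2 × ZMod 2) →* Q, Function.Surjective ψ := by
  have hσ := BnRP2.map_sigma_eq_of_metabelian (φ := φ) hn hmet
  set s := φ (BnRP2.sigma n ⟨0, by omega⟩)
  set r := φ (BnRP2.rho n ⟨0, by omega⟩)
  have hgen : closure {s, r} = ⊤ := by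
    refine eq_top_iff.mpr ((PresentedGroup.closure_range_comp_of_surjective hsurj).symm.le.trans
      (closure_mono ?_))
    rintro _ ⟨i | j, rfl⟩
    · exact Or.inl (hσ i _)
    · exact Or.inr (BnRP2.map_rho_eq hσ (by omega) j _)
  obtain ⟨ψ, hψ⟩ := exists_surjective_zmod_prod_of_closure_pair
    (BnRP2.commute_map_sigma_map_rho hσ (by omega) _ _) (BnRP2.map_sigma_sq hσ (by omega) _)
    (BnRP2.map_rho_sq hσ (by omega) _) hgen
  refine ⟨fun a b => ?_, ψ, hψ⟩
  obtain ⟨p, rfl⟩ := hψ a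
  obtain ⟨q, rfl⟩ := hψ b
  rw [← map_mul, mul_comm, map_mul]
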